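/- arXiv:1312.4385 — 3 statements merged into one kernel-verified Lean document; each statement's English description precedes it below -/
import Mathlib

section
/- Let ℍ = (H_t)_{t ∈ [0,T]} be a filtration of sub-σ-algebras of 𝒜. Let φ : [0,T] × Ω → ℝ be jointly measurable with ∫₀^T E[|φ(u,·)|] du < ∞, and let ψ : [0,T] × Ω → ℝ be jointly measurable such that for Lebesgue-almost every u ∈ [0,T], ψ(u,·) is H_u-measurable and is a version of E[φ(u,·) | H_u]. Define m_t(ω) := E[∫₀^t φ(u,·) du | H_t](ω) − ∫₀^t ψ(u,ω) du for t ∈ [0,T]. Then m = (m_t)_{t ∈ [0,T]} is an (ℍ, P)-martingale: each m_t is P-integrable and has an H_t-measurable version, and for all 0 ≤ s ≤ t ≤ T, E[m_t | H_s] = m_s P-a.s. (This is the paper's claim that the process m_t = ᵒ(∫₀^t α_u^𝔽 a_u du) − ∫₀^t ᵒ(α_u^𝔽 a_u) du is an (ℍ, P)-martingale, where ᵒ denotes ℍ-optional projection.) -/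
/-!
Write `Φₜ = ∫₀ᵗ φ`, `Ψₜ = ∫₀ᵗ ψ` and `Xₜ = Φₜ - Ψₜ`. Since `ψ(u,·)` is `H_u ⊆ H_t`-measurable for
`u ≤ t`, the time integral `Ψₜ` agrees a.s. with `E[Ψₜ | H_t]`, so `mₜ = E[Xₜ | H_t]` a.s. For
`s ≤ t` and `A ∈ H_s`, Fubini gives `∫_A (Xₜ - Xₛ) dP = ∫ₛᵗ ∫_A (φ(u,·) - ψ(u,·)) dP du = 0`,
because `A ∈ H_u` and `ψ(u,·) = E[φ(u,·) | H_u]`. Hence `E[Xₜ | H_s] = E[Xₛ | H_s]`, and the tower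
property gives `E[mₜ | H_s] = mₛ`.

The measurability of `Ψₜ` is the delicate point: `ψ` is only jointly measurable for the ambient
σ-algebra, so `Ψₜ` need not be `H_t`-measurable. Instead one checks `E[Ψₜ τ] = E[E[Ψₜ | H_t] τ]`
for every bounded `τ`, moving `E[· | H_t]` from `τ` onto `ψ(u,·)` inside the time integral.
-/

open MeasureTheory Set Filter Function

namespace MeasureTheory

section CondExp

variable {Ω : Type*} {m m₀ : MeasurableSpace Ω} {μ : Measure Ω} {f g : Ω → ℝ} {C : ℝ}

theorem setIntegral_sub_eq_zero_of_ae_eq_condExp {A : Set Ω} (hm : m ≤ m₀) [SigmaFinite (μ.trim hm)]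
    (hf : Integrable f μ) (hg : g =ᵐ[μ] μ[f | m]) (hA : MeasurableSet[m] A) :
    ∫ ω in A, (f ω - g ω) ∂μ = 0 := by
  rw [integral_sub hf.integrableOn (integrable_condExp.congr hg.symm).integrableOn,
    integral_congr_ae (ae_restrict_of_ae hg), setIntegral_condExp hm hf hA, sub_self]

theorem ae_eq_of_forall_integral_mul_eq (hf : Integrable f μ) (hg : Integrable g μ)
    (h : ∀ τ : Ω → ℝ, Measurable τ → (∀ ω, |τ ω| ≤ 1) →
      ∫ ω, f ω * τ ω ∂μ = ∫ ω, g ω * τ ω ∂μ) :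
    f =ᵐ[μ] g := by
  refine hf.ae_eq_of_forall_setIntegral_eq f g hg fun A hA _ => ?_
  have hA1 : ∀ ω, |A.indicator (1 : Ω → ℝ) ω| ≤ 1 := fun ω => by
    by_cases hω : ω ∈ A <;> simp [hω]
  have hmul : ∀ k : Ω → ℝ, (fun ω => k ω * A.indicator 1 ω) = A.indicator k := fun k =>
    funext fun ω => by by_cases hω : ω ∈ A <;> simp [hω]
  simpa only [hmul, integral_indicator hA] using
    h (A.indicator 1) (measurable_one.indicator hA) hA1

variable [IsFiniteMeasure μ]

theorem integral_condExp_mul_eq_integral_mul_condExp (hm : m ≤ m₀) (hf : Integrable f μ)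
    (hg : AEStronglyMeasurable g μ) (hgC : ∀ᵐ ω ∂μ, |g ω| ≤ C) :
    ∫ ω, μ[f | m] ω * g ω ∂μ = ∫ ω, f ω * μ[g | m] ω ∂μ := by
  have hg_int : Integrable g μ := (integrable_const C).mono' hg hgC
  have hcg : ∀ᵐ ω ∂μ, |μ[g | m] ω| ≤ C := ae_bdd_abs_condExp_of_ae_bdd_abs hgC
  calc ∫ ω, μ[f | m] ω * g ω ∂μ = ∫ ω, μ[μ[f | m] * g | m] ω ∂μ := (integral_condExp hm).symm
    _ = ∫ ω, μ[f | m] ω * μ[g | m] ω ∂μ :=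
      integral_congr_ae (condExp_mul_of_stronglyMeasurable_left stronglyMeasurable_condExp
        (integrable_condExp.mul_bdd hg hgC) hg_int)
    _ = ∫ ω, μ[f * μ[g | m] | m] ω ∂μ :=
      (integral_congr_ae (condExp_mul_of_stronglyMeasurable_right stronglyMeasurable_condExp
        (hf.mul_bdd (stronglyMeasurable_condExp.mono hm).aestronglyMeasurable hcg) hf)).symm
    _ = ∫ ω, f ω * μ[g | m] ω ∂μ := integral_condExp hm

end CondExp

section TimeIntegral

variable {α Ω : Type*} [MeasurableSpace α] {m m₀ : MeasurableSpace Ω} {ν : Measure α}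
  {μ : Measure Ω} [IsFiniteMeasure μ] {F G : α → Ω → ℝ}

theorem integrable_uncurry_of_lintegral_lt_top (hF : AEStronglyMeasurable (uncurry F) (ν.prod μ))
    (hF_L1 : ∫⁻ u, ∫⁻ ω, ENNReal.ofReal |F u ω| ∂μ ∂ν < ⊤) :
    Integrable (uncurry F) (ν.prod μ) := by
  refine ⟨hF, ?_⟩
  rw [hasFiniteIntegral_iff_norm, lintegral_prod _ hF.norm.aemeasurable.ennreal_ofReal]
  simpa only [Real.norm_eq_abs, uncurry_apply_pair] using hF_L1

theorem Integrable.uncurry_of_ae_eq_condExp {m : α → MeasurableSpace Ω}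
    (hF : Integrable (uncurry F) (ν.prod μ)) (hG : AEStronglyMeasurable (uncurry G) (ν.prod μ))
    (hGF : ∀ᵐ u ∂ν, G u =ᵐ[μ] μ[F u | m u]) :
    Integrable (uncurry G) (ν.prod μ) := by
  refine (integrable_prod_iff hG).2 ⟨hGF.mono fun u hu => integrable_condExp.congr hu.symm, ?_⟩
  refine hF.integral_norm_prod_left.mono' hG.norm.integral_prod_right' (hGF.mono fun u hu => ?_)
  show ‖∫ ω, ‖G u ω‖ ∂μ‖ ≤ ∫ ω, ‖F u ω‖ ∂μ
  rw [Real.norm_of_nonneg (integral_nonneg fun ω => norm_nonneg _),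
    integral_congr_ae (hu.mono fun ω hω => congrArg (‖·‖) hω)]
  exact integral_norm_condExp_le (F u)

variable [SFinite ν]

theorem Integrable.restrict_prod_of_subset {S S' : Set α}
    (hF : Integrable (uncurry F) ((ν.restrict S').prod μ)) (hS : S ⊆ S') :
    Integrable (uncurry F) ((ν.restrict S).prod μ) := by
  rw [Measure.restrict_prod_eq_prod_univ] at hF ⊢
  exact hF.mono_measure (Measure.restrict_mono (prod_mono hS le_rfl) le_rfl)

theorem integral_integral_mul_swap {σ : Ω → ℝ} {C : ℝ} (hF : Integrable (uncurry F) (ν.prod μ))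
    (hσ : AEStronglyMeasurable σ μ) (hσC : ∀ᵐ ω ∂μ, |σ ω| ≤ C) :
    ∫ ω, (∫ u, F u ω ∂ν) * σ ω ∂μ = ∫ u, ∫ ω, F u ω * σ ω ∂μ ∂ν := by
  have hsnd := Measure.quasiMeasurePreserving_snd (μ := ν) (ν := μ)
  have hFσ : Integrable (uncurry fun u ω => F u ω * σ ω) (ν.prod μ) :=
    hF.mul_bdd (hσ.comp_quasiMeasurePreserving hsnd) (hsnd.ae hσC)
  simp_rw [← integral_mul_const]
  exact (integral_integral_swap hFσ).symm

theorem setIntegral_integral_swap (hF : Integrable (uncurry F) (ν.prod μ)) (A : Set Ω) :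
    ∫ ω in A, ∫ u, F u ω ∂ν ∂μ = ∫ u, ∫ ω in A, F u ω ∂μ ∂ν := by
  have hA : ν.prod (μ.restrict A) = (ν.prod μ).restrict (univ ×ˢ A) := by
    rw [← Measure.prod_restrict, Measure.restrict_univ]
  exact (integral_integral_swap (hA ▸ hF.restrict)).symm

theorem integral_ae_eq_condExp_of_ae_stronglyMeasurable (hm : m ≤ m₀)
    (hF : Integrable (uncurry F) (ν.prod μ)) (hFm : ∀ᵐ u ∂ν, StronglyMeasurable[m] (F u)) :
    (fun ω => ∫ u, F u ω ∂ν) =ᵐ[μ] μ[fun ω => ∫ u, F u ω ∂ν | m] := by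
  refine ae_eq_of_forall_integral_mul_eq hF.integral_prod_right integrable_condExp
    fun τ hτ hτ1 => ?_
  have hτC : ∀ᵐ ω ∂μ, |τ ω| ≤ 1 := ae_of_all _ hτ1
  have hslice : ∀ᵐ u ∂ν, ∫ ω, F u ω * τ ω ∂μ = ∫ ω, F u ω * μ[τ | m] ω ∂μ := by
    filter_upwards [hFm, hF.prod_right_ae] with u hum (hui : Integrable (F u) μ)
    rw [← integral_condExp_mul_eq_integral_mul_condExp hm hui hτ.aestronglyMeasurable hτC,
      condExp_of_stronglyMeasurable hm hum hui]
  calc ∫ ω, (∫ u, F u ω ∂ν) * τ ω ∂μ = ∫ u, ∫ ω, F u ω * τ ω ∂μ ∂ν :=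
        integral_integral_mul_swap hF hτ.aestronglyMeasurable hτC
    _ = ∫ u, ∫ ω, F u ω * μ[τ | m] ω ∂μ ∂ν := integral_congr_ae hslice
    _ = ∫ ω, (∫ u, F u ω ∂ν) * μ[τ | m] ω ∂μ :=
        (integral_integral_mul_swap hF (stronglyMeasurable_condExp.mono hm).aestronglyMeasurable
          (ae_bdd_abs_condExp_of_ae_bdd_abs hτC)).symm
    _ = ∫ ω, μ[fun ω => ∫ u, F u ω ∂ν | m] ω * τ ω ∂μ :=
        (integral_condExp_mul_eq_integral_mul_condExp hm hF.integral_prod_right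
          hτ.aestronglyMeasurable hτC).symm

theorem condExp_integral_sub_integral_ae_eq (hm : m ≤ m₀) (hF : Integrable (uncurry F) (ν.prod μ))
    (hG : Integrable (uncurry G) (ν.prod μ)) (hGm : ∀ᵐ u ∂ν, StronglyMeasurable[m] (G u)) :
    (μ[fun ω => ∫ u, F u ω ∂ν | m] - fun ω => ∫ u, G u ω ∂ν)
      =ᵐ[μ] μ[fun ω => ∫ u, (F u ω - G u ω) ∂ν | m] := by
  have hsub : (fun ω => ∫ u, (F u ω - G u ω) ∂ν)
      =ᵐ[μ] (fun ω => ∫ u, F u ω ∂ν) - fun ω => ∫ u, G u ω ∂ν := by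
    filter_upwards [hF.prod_left_ae, hG.prod_left_ae] with ω hFω hGω
    exact integral_sub hFω hGω
  exact (EventuallyEq.rfl.sub (integral_ae_eq_condExp_of_ae_stronglyMeasurable hm hG hGm)).trans
    ((condExp_sub hF.integral_prod_right hG.integral_prod_right m).symm.trans
      (condExp_congr_ae hsub.symm))

theorem condExp_setIntegral_eq_of_subset {S S' : Set α} (hm : m ≤ m₀) (hS' : MeasurableSet S')
    (hSS' : S ⊆ S') (hF : Integrable (uncurry F) ((ν.restrict S').prod μ))
    (hF0 : ∀ᵐ u ∂ν, u ∈ S' \ S → ∀ A, MeasurableSet[m] A → ∫ ω in A, F u ω ∂μ = 0) :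
    μ[fun ω => ∫ u in S', F u ω ∂ν | m] =ᵐ[μ] μ[fun ω => ∫ u in S, F u ω ∂ν | m] := by
  have hFS := hF.restrict_prod_of_subset hSS'
  have hXS' : Integrable (fun ω => ∫ u in S', F u ω ∂ν) μ := hF.integral_prod_right
  have hXS : Integrable (fun ω => ∫ u in S, F u ω ∂ν) μ := hFS.integral_prod_right
  refine (ae_eq_condExp_of_forall_setIntegral_eq hm hXS'
    (fun _ _ _ => integrable_condExp.integrableOn) (fun A hA _ => ?_)
    stronglyMeasurable_condExp.aestronglyMeasurable).symm
  rw [setIntegral_condExp hm hXS hA, setIntegral_integral_swap hFS,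
    setIntegral_integral_swap hF]
  exact (setIntegral_eq_of_subset_of_ae_sdiff_eq_zero hS'.nullMeasurableSet hSS'
    (hF0.mono fun u hu huS => hu huS A hA)).symm

end TimeIntegral

end MeasureTheory

theorem stmt_2_general {Ω : Type*} {𝒜 : MeasurableSpace Ω} {P : Measure Ω} [IsProbabilityMeasure P]
    (T : ℝ)
    (ℍ : Filtration ℝ 𝒜)
    (φ ψ : ℝ → Ω → ℝ) (m : ℝ → Ω → ℝ)
    (hφ_meas : Measurable (Function.uncurry φ))
    (hψ_meas : Measurable (Function.uncurry ψ))
    (hφ_L1 : (∫⁻ u in Icc (0:ℝ) T, ∫⁻ ω, ENNReal.ofReal |φ u ω| ∂P) < ⊤)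
    (hψ : ∀ᵐ u ∂(volume.restrict (Icc (0:ℝ) T)),
      StronglyMeasurable[ℍ u] (ψ u) ∧ ψ u =ᵐ[P] P[φ u | ℍ u])
    (hm : ∀ t ∈ Icc (0:ℝ) T, m t = fun ω =>
      (P[(fun ω' => ∫ u in Icc (0:ℝ) t, φ u ω') | ℍ t]) ω - ∫ u in Icc (0:ℝ) t, ψ u ω) :
    (∀ t ∈ Icc (0:ℝ) T, Integrable (m t) P ∧
      ∃ g : Ω → ℝ, StronglyMeasurable[ℍ t] g ∧ m t =ᵐ[P] g) ∧
    (∀ s ∈ Icc (0:ℝ) T, ∀ t ∈ Icc (0:ℝ) T, s ≤ t → P[m t | ℍ s] =ᵐ[P] m s) := by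
  have hφ_int := integrable_uncurry_of_lintegral_lt_top hφ_meas.aestronglyMeasurable hφ_L1
  have hψ_int : Integrable (uncurry ψ) ((volume.restrict (Icc 0 T)).prod P) :=
    hφ_int.uncurry_of_ae_eq_condExp hψ_meas.aestronglyMeasurable (hψ.mono fun u hu => hu.2)
  have hm_eq : ∀ t ∈ Icc (0:ℝ) T,
      m t =ᵐ[P] P[fun ω => ∫ u in Icc 0 t, (φ u ω - ψ u ω) | ℍ t] := fun t ht => by
    have htT : Icc 0 t ⊆ Icc 0 T := Icc_subset_Icc_right ht.2
    rw [hm t ht]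
    refine condExp_integral_sub_integral_ae_eq (ℍ.le t) (hφ_int.restrict_prod_of_subset htT)
      (hψ_int.restrict_prod_of_subset htT) ?_
    filter_upwards [ae_restrict_of_ae_restrict_of_subset htT hψ,
      ae_restrict_mem measurableSet_Icc] with u hu hut
    exact hu.1.mono (ℍ.mono hut.2)
  have hincrement : ∀ s t, t ≤ T → ∀ᵐ u ∂volume, u ∈ Icc 0 t \ Icc 0 s →
      ∀ A, MeasurableSet[ℍ s] A → ∫ ω in A, (φ u ω - ψ u ω) ∂P = 0 := fun s t htT => by
    filter_upwards [(ae_restrict_iff' measurableSet_Icc).1 (hψ.and hφ_int.prod_right_ae)]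
      with u hu ⟨⟨hu0, hut⟩, hus⟩ A hA
    obtain ⟨⟨-, hψu⟩, hφu⟩ := hu ⟨hu0, hut.trans htT⟩
    have hsu : s ≤ u := (not_le.1 fun h => hus ⟨hu0, h⟩).le
    exact setIntegral_sub_eq_zero_of_ae_eq_condExp (ℍ.le u) hφu hψu (ℍ.mono hsu A hA)
  refine ⟨fun t ht => ⟨integrable_condExp.congr (hm_eq t ht).symm, _, stronglyMeasurable_condExp,
    hm_eq t ht⟩, fun s hs t ht hst => ?_⟩
  calc P[m t | ℍ s]
      =ᵐ[P] P[P[fun ω => ∫ u in Icc 0 t, (φ u ω - ψ u ω) | ℍ t] | ℍ s] :=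
        condExp_congr_ae (hm_eq t ht)
    _ =ᵐ[P] P[fun ω => ∫ u in Icc 0 t, (φ u ω - ψ u ω) | ℍ s] :=
        condExp_condExp_of_le (ℍ.mono hst) (ℍ.le t)
    _ =ᵐ[P] P[fun ω => ∫ u in Icc 0 s, (φ u ω - ψ u ω) | ℍ s] :=
        condExp_setIntegral_eq_of_subset (ℍ.le s) measurableSet_Icc (Icc_subset_Icc_right hst)
          ((hφ_int.sub hψ_int).restrict_prod_of_subset (Icc_subset_Icc_right ht.2))
          (hincrement s t ht.2)
    _ =ᵐ[P] m s := (hm_eq s hs).symm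

/-- The process m_t = E[∫₀ᵗ φ(u,·) du | H_t] − ∫₀ᵗ ψ(u,·) du, where ψ(u,·) is a
version of E[φ(u,·) | H_u], is an (ℍ,P)-martingale. -/
theorem stmt_2 {Ω : Type*} {𝒜 : MeasurableSpace Ω} {P : Measure Ω} [IsProbabilityMeasure P]
    (T : ℝ) (hT : 0 < T)
    (ℍ : Filtration ℝ 𝒜)
    (φ ψ : ℝ → Ω → ℝ) (m : ℝ → Ω → ℝ)
    (hφ_meas : Measurable (Function.uncurry φ))
    (hψ_meas : Measurable (Function.uncurry ψ))
    (hφ_int : ∀ u ∈ Icc (0:ℝ) T, Integrable (φ u) P)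
    (hφ_L1 : (∫⁻ u in Icc (0:ℝ) T, ∫⁻ ω, ENNReal.ofReal |φ u ω| ∂P) < ⊤)
    (hψ : ∀ᵐ u ∂(volume.restrict (Icc (0:ℝ) T)),
      StronglyMeasurable[ℍ u] (ψ u) ∧ ψ u =ᵐ[P] P[φ u | ℍ u])
    (hm : ∀ t ∈ Icc (0:ℝ) T, m t = fun ω =>
      (P[(fun ω' => ∫ u in Icc (0:ℝ) t, φ u ω') | ℍ t]) ω - ∫ u in Icc (0:ℝ) t, ψ u ω) :
    (∀ t ∈ Icc (0:ℝ) T, Integrable (m t) P ∧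
      ∃ g : Ω → ℝ, StronglyMeasurable[ℍ t] g ∧ m t =ᵐ[P] g) ∧
    (∀ s ∈ Icc (0:ℝ) T, ∀ t ∈ Icc (0:ℝ) T, s ≤ t → P[m t | ℍ s] =ᵐ[P] m s) :=
  stmt_2_general T ℍ φ ψ m hφ_meas hψ_meas hφ_L1 hψ hm
end

section
/- Let (Z, 𝒵, η) be a measure space, let a ∈ ℝ and σ > 0 be real numbers, and let K : Z → ℝ be measurable, η-integrable and square η-integrable with η({z ∈ Z : K(z) ≠ 0}) < ∞. Then (a + ∫_Z K dη)² / (σ² + ∫_Z K² dη) ≤ 2a²/σ² + 2·η({z ∈ Z : K(z) ≠ 0}). (This pointwise inequality, obtained from (x+y)² ≤ 2x² + 2y² together with the Cauchy–Schwarz inequality on the support of K, is the key estimate in the paper's remark giving a sufficient condition for existence of the minimal martingale measure in the jump-diffusion market model.) -/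
/-!
With `I = ∫ K dη`, `(a + I)² ≤ 2a² + 2I²`, so it suffices that `I² ≤ η{K ≠ 0} · ∫ K² dη`.
This is Cauchy–Schwarz for `K` and the constant `1` with respect to the finite measure `η`
restricted to `{K ≠ 0}`, outside of which `K` vanishes.
-/

open MeasureTheory Set

theorem sq_integral_le_measureReal_univ_mul_integral_sq {Z : Type*} [MeasurableSpace Z]
    {μ : Measure Z} [IsFiniteMeasure μ] {f : Z → ℝ} (hf : Integrable f μ)
    (hf_sq : Integrable (fun z => f z ^ 2) μ) :
    (∫ z, f z ∂μ) ^ 2 ≤ μ.real univ * ∫ z, f z ^ 2 ∂μ := by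
  -- `t ↦ ∫ (f - t)²` is a nonnegative quadratic polynomial, so its discriminant is `≤ 0`.
  have hquad : ∀ t : ℝ,
      0 ≤ μ.real univ * (t * t) + (-2 * ∫ z, f z ∂μ) * t + ∫ z, f z ^ 2 ∂μ := by
    intro t
    have hexpand : ∫ z, (f z - t) ^ 2 ∂μ =
        μ.real univ * (t * t) + (-2 * ∫ z, f z ∂μ) * t + ∫ z, f z ^ 2 ∂μ := by
      have hlin : Integrable (fun z => 2 * f z * t) μ := (hf.const_mul 2).mul_const t
      simp only [sub_sq]
      rw [integral_add (f := fun z => f z ^ 2 - 2 * f z * t) (hf_sq.sub hlin)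
        (integrable_const _), integral_sub hf_sq hlin, integral_mul_const, integral_const_mul,
        integral_const, smul_eq_mul]
      ring
    exact hexpand ▸ integral_nonneg fun z => sq_nonneg _
  have hdiscrim := discrim_le_zero hquad
  rw [discrim] at hdiscrim
  linarith

theorem sq_integral_le_measureReal_support_mul_integral_sq {Z : Type*} [MeasurableSpace Z]
    {η : Measure Z} {K : Z → ℝ} (hK : Integrable K η)
    (hK_sq : Integrable (fun z => K z ^ 2) η)
    (hsupp : η {z | K z ≠ 0} < ⊤) :
    (∫ z, K z ∂η) ^ 2 ≤ η.real {z | K z ≠ 0} * ∫ z, K z ^ 2 ∂η := by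
  set s : Set Z := {z | K z ≠ 0}
  have : IsFiniteMeasure (η.restrict s) := isFiniteMeasure_restrict.mpr hsupp.ne
  have hvanish : ∀ z ∉ s, K z = 0 := fun z hz => not_not.mp hz
  have h := sq_integral_le_measureReal_univ_mul_integral_sq (hK.restrict (s := s))
    (hK_sq.restrict (s := s))
  rwa [setIntegral_eq_integral_of_forall_compl_eq_zero hvanish,
    setIntegral_eq_integral_of_forall_compl_eq_zero fun z hz => by simp [hvanish z hz],
    measureReal_restrict_apply_univ] at h

theorem stmt_6_general {Z : Type*} [MeasurableSpace Z] (η : Measure Z)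
    (a σ : ℝ) (hσ : 0 < σ)
    (K : Z → ℝ)
    (hK_int : Integrable K η) (hK_sq : Integrable (fun z => K z ^ 2) η)
    (hsupp : η {z | K z ≠ 0} < ⊤) :
    (a + ∫ z, K z ∂η) ^ 2 / (σ ^ 2 + ∫ z, K z ^ 2 ∂η) ≤
      2 * a ^ 2 / σ ^ 2 + 2 * (η {z | K z ≠ 0}).toReal := by
  set I := ∫ z, K z ∂η
  set J := ∫ z, K z ^ 2 ∂η
  set m := (η {z | K z ≠ 0}).toReal
  have hCS : I ^ 2 ≤ m * J :=
    sq_integral_le_measureReal_support_mul_integral_sq hK_int hK_sq hsupp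
  have hJ : 0 ≤ J := integral_nonneg fun z => sq_nonneg _
  have hm : 0 ≤ m := ENNReal.toReal_nonneg
  rw [div_le_iff₀ (by positivity)]
  have hσJ : 0 ≤ a ^ 2 / σ ^ 2 * J := by positivity
  have hσm : 0 ≤ m * σ ^ 2 := by positivity
  calc (a + I) ^ 2 ≤ 2 * a ^ 2 + 2 * I ^ 2 := by nlinarith [sq_nonneg (a - I)]
    _ ≤ 2 * a ^ 2 + 2 * (m * J) + 2 * (a ^ 2 / σ ^ 2 * J) + 2 * (m * σ ^ 2) := by linarith
    _ = (2 * a ^ 2 / σ ^ 2 + 2 * m) * (σ ^ 2 + J) := by field_simp; ring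

/-- The pointwise estimate
`(a + ∫ K dη)² / (σ² + ∫ K² dη) ≤ 2a²/σ² + 2 η({K ≠ 0})`
used for the jump-diffusion market model. -/
theorem stmt_6 {Z : Type*} [MeasurableSpace Z] (η : Measure Z) [SigmaFinite η]
    (a σ : ℝ) (hσ : 0 < σ)
    (K : Z → ℝ) (hK_meas : Measurable K)
    (hK_int : Integrable K η) (hK_sq : Integrable (fun z => K z ^ 2) η)
    (hsupp : η {z | K z ≠ 0} < ⊤) :
    (a + ∫ z, K z ∂η) ^ 2 / (σ ^ 2 + ∫ z, K z ^ 2 ∂η) ≤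
      2 * a ^ 2 / σ ^ 2 + 2 * (η {z | K z ≠ 0}).toReal :=
  stmt_6_general η a σ hσ K hK_int hK_sq hsupp
end

section
/- Let (Z, 𝒵, η) be a σ-finite measure space, K : [0,T] × Ω × Z → ℝ jointly measurable such that for every (t,ω): K(t,ω,·) is η-integrable and square η-integrable and η(D_t(ω)) < ∞, where D_t(ω) := {ζ ∈ Z : K(t,ω,ζ) ≠ 0}. Let μ₁, σ₁ : [0,T] × Ω → ℝ be jointly measurable processes and c₁ ≥ 0, c₂ > 0 constants with |μ₁(t,ω)| ≤ c₁ and σ₁(t,ω) ≥ c₂ for all (t,ω); assume that for every ω the maps t ↦ (μ₁(t,ω) + ∫_Z K(t,ω,ζ) η(dζ))² / (σ₁(t,ω)² + ∫_Z K(t,ω,ζ)² η(dζ)) and t ↦ η(D_t(ω)) are measurable on [0,T]. Then ∫_Ω exp( ∫₀^T (μ₁(t,ω) + ∫_Z K(t,ω,ζ) η(dζ))² / (σ₁(t,ω)² + ∫_Z K(t,ω,ζ)² η(dζ)) dt ) P(dω) ≤ exp(2 c₁² T / c₂²) · ∫_Ω exp( 2 ∫₀^T η(D_t(ω)) dt )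 P(dω), where inner time integrals are (possibly infinite) Lebesgue integrals of nonnegative functions, exp(∞) := ∞, and both outer integrals are [0,∞]-valued Lebesgue integrals. (This is the paper's remark that E[exp{2∫₀^T η(D_t) dt}] < ∞ is a sufficient condition for the exponential-moment condition (ps3) ensuring existence of the minimal martingale measure in the jump-diffusion market model.) -/
/-!
By Cauchy–Schwarz on the support `D_t` of `K(t,ω,·)`, `(∫ K dη)² ≤ η(D_t) ∫ K² dη`, so
`(μ₁ + ∫ K dη)² ≤ 2μ₁² + 2η(D_t) ∫ K² dη ≤ (2c₁²/c₂² + 2η(D_t)) (σ₁² + ∫ K² dη)`.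
Integrating in time gives `∫₀ᵀ ratio ≤ 2c₁²T/c₂² + 2∫₀ᵀ η(D_t) dt`, and the exponential turns
the constant summand into the factor `exp(2c₁²T/c₂²)`.
-/

open MeasureTheory Set
open scoped ENNReal

/-- The exponential function extended to `[0,∞]`, with `exp(∞) := ∞`. -/
noncomputable def expENN (x : ENNReal) : ENNReal :=
  if x = ⊤ then ⊤ else ENNReal.ofReal (Real.exp x.toReal)

theorem sq_integral_le_measureReal_support_mul_integral_sq_s7 {α : Type*} [MeasurableSpace α]
    {μ : Measure α} {f : α → ℝ} (hf : Measurable f)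
    (hf2 : Integrable (fun x => f x ^ 2) μ) (hsupp : μ (Function.support f) ≠ ∞) :
    (∫ x, f x ∂μ) ^ 2 ≤ μ.real (Function.support f) * ∫ x, f x ^ 2 ∂μ := by
  set D := Function.support f
  have hD : MeasurableSet D := measurableSet_support hf
  have holder := integral_mul_le_Lp_mul_Lq_of_nonneg Real.HolderConjugate.two_two
    (f := D.indicator 1) (g := fun x => |f x|)
    (ae_of_all _ (indicator_nonneg fun _ _ => zero_le_one)) (ae_of_all _ fun x => abs_nonneg (f x))
    (by rw [ENNReal.ofReal_ofNat]; exact memLp_indicator_const 2 hD (1 : ℝ) (Or.inr hsupp))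
    (by rw [ENNReal.ofReal_ofNat]
        exact ((memLp_two_iff_integrable_sq hf.aestronglyMeasurable).2 hf2).abs)
  have h_left : ∫ x, D.indicator 1 x * |f x| ∂μ = ∫ x, |f x| ∂μ := by
    refine integral_congr_ae (ae_of_all _ fun x => ?_)
    by_cases hx : f x = 0 <;> simp [D, hx]
  have h_ind : ∫ x, D.indicator 1 x ^ (2 : ℝ) ∂μ = μ.real D := by
    rw [← integral_indicator_one hD]
    refine integral_congr_ae (ae_of_all _ fun x => ?_)
    by_cases hx : x ∈ D <;> simp [hx]
  have h_abs : ∫ x, |f x| ^ (2 : ℝ) ∂μ = ∫ x, f x ^ 2 ∂μ := by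
    simp only [Real.rpow_two, sq_abs]
  rw [h_left, h_ind, h_abs, ← Real.sqrt_eq_rpow, ← Real.sqrt_eq_rpow] at holder
  calc (∫ x, f x ∂μ) ^ 2 ≤ (∫ x, |f x| ∂μ) ^ 2 := by
        rw [← sq_abs]
        gcongr
        exact abs_integral_le_integral_abs
    _ ≤ (√(μ.real D) * √(∫ x, f x ^ 2 ∂μ)) ^ 2 := by gcongr
    _ = μ.real D * ∫ x, f x ^ 2 ∂μ := by
        rw [mul_pow, Real.sq_sqrt measureReal_nonneg,
          Real.sq_sqrt (integral_nonneg fun x => sq_nonneg (f x))]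

theorem sq_add_div_sq_add_le {a b s v d c₁ c₂ : ℝ} (hc₂ : 0 < c₂) (ha : |a| ≤ c₁)
    (hs : c₂ ≤ s) (hv : 0 ≤ v) (hd : 0 ≤ d) (hb : b ^ 2 ≤ d * v) :
    (a + b) ^ 2 / (s ^ 2 + v) ≤ 2 * c₁ ^ 2 / c₂ ^ 2 + 2 * d := by
  have hden : c₂ ^ 2 ≤ s ^ 2 + v := by nlinarith
  have hpos : 0 < s ^ 2 + v := (pow_pos hc₂ 2).trans_le hden
  have ha2 : a ^ 2 ≤ c₁ ^ 2 := sq_le_sq' (abs_le.1 ha).1 (abs_le.1 ha).2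
  calc (a + b) ^ 2 / (s ^ 2 + v) ≤ (2 * a ^ 2 + 2 * b ^ 2) / (s ^ 2 + v) := by
        gcongr
        nlinarith [sq_nonneg (a - b)]
    _ = 2 * (a ^ 2 / (s ^ 2 + v)) + 2 * (b ^ 2 / (s ^ 2 + v)) := by ring
    _ ≤ 2 * (c₁ ^ 2 / c₂ ^ 2) + 2 * d := by
        have hb' : b ^ 2 / (s ^ 2 + v) ≤ d := div_le_of_le_mul₀ hpos.le hd (by nlinarith)
        gcongr
    _ = 2 * c₁ ^ 2 / c₂ ^ 2 + 2 * d := by ring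

theorem setLIntegral_ofReal_le_const_mul_add {β : Type*} [MeasurableSpace β] {ν : Measure β}
    (s : Set β) {f : β → ℝ} {g : β → ℝ≥0∞} {C : ℝ} (hC : 0 ≤ C) (hg : ∀ x, g x ≠ ∞)
    (hfg : ∀ x, f x ≤ C + (g x).toReal) :
    ∫⁻ x in s, ENNReal.ofReal (f x) ∂ν ≤ ENNReal.ofReal C * ν s + ∫⁻ x in s, g x ∂ν := by
  calc ∫⁻ x in s, ENNReal.ofReal (f x) ∂ν ≤ ∫⁻ x in s, (ENNReal.ofReal C + g x) ∂ν := by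
        refine lintegral_mono fun x => (ENNReal.ofReal_le_ofReal (hfg x)).trans_eq ?_
        rw [ENNReal.ofReal_add hC ENNReal.toReal_nonneg, ENNReal.ofReal_toReal (hg x)]
    _ = ENNReal.ofReal C * ν s + ∫⁻ x in s, g x ∂ν := by
        rw [lintegral_add_left measurable_const, setLIntegral_const]

theorem expENN_monotone : Monotone expENN := by
  intro x y h
  unfold expENN
  split_ifs with hx hy hy
  · exact le_rfl
  · exact absurd (top_le_iff.mp (hx ▸ h)) hy
  · exact le_top
  · exact ENNReal.ofReal_le_ofReal (Real.exp_le_exp.2 (ENNReal.toReal_mono hy h))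

theorem expENN_ofReal_add {r : ℝ} (hr : 0 ≤ r) (x : ℝ≥0∞) :
    expENN (ENNReal.ofReal r + x) = ENNReal.ofReal (Real.exp r) * expENN x := by
  unfold expENN
  by_cases hx : x = ⊤
  · simp [hx, ENNReal.mul_top, (Real.exp_pos r).not_ge]
  · have hne : ENNReal.ofReal r + x ≠ ⊤ := ENNReal.add_ne_top.2 ⟨ENNReal.ofReal_ne_top, hx⟩
    rw [if_neg hne, if_neg hx, ENNReal.toReal_add ENNReal.ofReal_ne_top hx,
      ENNReal.toReal_ofReal hr, Real.exp_add, ENNReal.ofReal_mul (Real.exp_pos r).le]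

theorem stmt_7_general {Ω : Type*} {𝒜 : MeasurableSpace Ω} {P : Measure Ω}
    (T : ℝ) (hT : 0 < T)
    {Z : Type*} [MeasurableSpace Z] (η : Measure Z)
    (K : ℝ → Ω → Z → ℝ)
    (hK_meas : Measurable (fun p : ℝ × Ω × Z => K p.1 p.2.1 p.2.2))
    (hK_sq_int : ∀ t ω, Integrable (fun z => K t ω z ^ 2) η)
    (hD_fin : ∀ t ω, η {z | K t ω z ≠ 0} < ⊤)
    (μ₁ σ₁ : ℝ → Ω → ℝ)
    (c₁ c₂ : ℝ) (hc₂ : 0 < c₂)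
    (hμ₁_bdd : ∀ t ω, |μ₁ t ω| ≤ c₁)
    (hσ₁_bdd : ∀ t ω, c₂ ≤ σ₁ t ω) :
    ∫⁻ ω, expENN (∫⁻ t in Icc (0:ℝ) T,
        ENNReal.ofReal ((μ₁ t ω + ∫ z, K t ω z ∂η) ^ 2 /
          (σ₁ t ω ^ 2 + ∫ z, K t ω z ^ 2 ∂η))) ∂P ≤
    ENNReal.ofReal (Real.exp (2 * c₁ ^ 2 * T / c₂ ^ 2)) *
      ∫⁻ ω, expENN (2 * ∫⁻ t in Icc (0:ℝ) T, η {z | K t ω z ≠ 0}) ∂P := by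
  have hratio : ∀ t ω, (μ₁ t ω + ∫ z, K t ω z ∂η) ^ 2 / (σ₁ t ω ^ 2 + ∫ z, K t ω z ^ 2 ∂η) ≤
      2 * c₁ ^ 2 / c₂ ^ 2 + (2 * η {z | K t ω z ≠ 0}).toReal := by
    intro t ω
    have hK : Measurable (K t ω) := hK_meas.comp (f := fun z => (t, ω, z)) (by fun_prop)
    rw [ENNReal.toReal_mul, ENNReal.toReal_ofNat]
    exact sq_add_div_sq_add_le hc₂ (hμ₁_bdd t ω) (hσ₁_bdd t ω)
      (integral_nonneg fun z => sq_nonneg _) ENNReal.toReal_nonneg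
      (sq_integral_le_measureReal_support_mul_integral_sq_s7 hK (hK_sq_int t ω) (hD_fin t ω).ne)
  have htime : ∀ ω, ∫⁻ t in Icc (0:ℝ) T, ENNReal.ofReal ((μ₁ t ω + ∫ z, K t ω z ∂η) ^ 2 /
        (σ₁ t ω ^ 2 + ∫ z, K t ω z ^ 2 ∂η)) ≤
      ENNReal.ofReal (2 * c₁ ^ 2 * T / c₂ ^ 2) + 2 * ∫⁻ t in Icc (0:ℝ) T, η {z | K t ω z ≠ 0} := by
    intro ω
    refine (setLIntegral_ofReal_le_const_mul_add _ (by positivity)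
      (fun t => ENNReal.mul_ne_top ENNReal.ofNat_ne_top (hD_fin t ω).ne) (hratio · ω)).trans_eq ?_
    rw [Real.volume_Icc, sub_zero, ← ENNReal.ofReal_mul (by positivity),
      lintegral_const_mul' _ _ ENNReal.ofNat_ne_top, div_mul_eq_mul_div]
  calc _ ≤ ∫⁻ ω, ENNReal.ofReal (Real.exp (2 * c₁ ^ 2 * T / c₂ ^ 2)) *
        expENN (2 * ∫⁻ t in Icc (0:ℝ) T, η {z | K t ω z ≠ 0}) ∂P :=
        lintegral_mono fun ω =>
          (expENN_monotone (htime ω)).trans_eq (expENN_ofReal_add (by positivity) _)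
    _ = _ := lintegral_const_mul' _ _ ENNReal.ofReal_ne_top

/-- `E[exp{2∫₀ᵀ η(D_t) dt}] < ∞` is sufficient for the exponential-moment condition
(ps3) of the jump-diffusion market model:
`E[exp{∫₀ᵀ (μ₁ + ∫ K dη)² / (σ₁² + ∫ K² dη) dt}]
  ≤ exp(2c₁²T/c₂²) · E[exp{2∫₀ᵀ η(D_t) dt}]`. -/
theorem stmt_7 {Ω : Type*} {𝒜 : MeasurableSpace Ω} {P : Measure Ω} [IsProbabilityMeasure P]
    (T : ℝ) (hT : 0 < T)
    {Z : Type*} [MeasurableSpace Z] (η : Measure Z) [SigmaFinite η]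
    (K : ℝ → Ω → Z → ℝ)
    (hK_meas : Measurable (fun p : ℝ × Ω × Z => K p.1 p.2.1 p.2.2))
    (hK_int : ∀ t ω, Integrable (K t ω) η)
    (hK_sq_int : ∀ t ω, Integrable (fun z => K t ω z ^ 2) η)
    (hD_fin : ∀ t ω, η {z | K t ω z ≠ 0} < ⊤)
    (μ₁ σ₁ : ℝ → Ω → ℝ)
    (hμ₁_meas : Measurable (Function.uncurry μ₁))
    (hσ₁_meas : Measurable (Function.uncurry σ₁))
    (c₁ c₂ : ℝ) (hc₁ : 0 ≤ c₁) (hc₂ : 0 < c₂)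
    (hμ₁_bdd : ∀ t ω, |μ₁ t ω| ≤ c₁)
    (hσ₁_bdd : ∀ t ω, c₂ ≤ σ₁ t ω)
    (hratio_meas : ∀ ω, Measurable (fun t : ℝ =>
      (μ₁ t ω + ∫ z, K t ω z ∂η) ^ 2 / (σ₁ t ω ^ 2 + ∫ z, K t ω z ^ 2 ∂η)))
    (hD_meas : ∀ ω, Measurable (fun t : ℝ => η {z | K t ω z ≠ 0})) :
    ∫⁻ ω, expENN (∫⁻ t in Icc (0:ℝ) T,
        ENNReal.ofReal ((μ₁ t ω + ∫ z, K t ω z ∂η) ^ 2 /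
          (σ₁ t ω ^ 2 + ∫ z, K t ω z ^ 2 ∂η))) ∂P ≤
    ENNReal.ofReal (Real.exp (2 * c₁ ^ 2 * T / c₂ ^ 2)) *
      ∫⁻ ω, expENN (2 * ∫⁻ t in Icc (0:ℝ) T, η {z | K t ω z ≠ 0}) ∂P :=
  stmt_7_general (𝒜 := 𝒜) T hT η K hK_meas hK_sq_int hD_fin μ₁ σ₁ c₁ c₂ hc₂ hμ₁_bdd hσ₁_bdd
end
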